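/- Let T : I → I be an interval exchange transformation that is ergodic with respect to Lebesgue measure. Then there exists β ∈ 𝒜 \ {π₀⁻¹(1)} such that M(β) = +∞, i.e., the backward orbit {T^{-n}(∂I_β)}_{n ≥ 1} never hits a left endpoint ∂I_α with π₁(α) ≠ 1. -/

import Mathlib

open MeasureTheory Set
open scoped Classical

/-- An interval exchange transformation (IET) on the interval `[a, b)`:
an alphabet `Fin d`, bijections `perm0`, `perm1 : Fin d ≃ Fin d` describing the order of
the exchanged intervals before and after applying the map, and a positive length vector
`len` summing up to `b - a`.  The permutation datum is assumed non-reducible. -/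
structure IET where
  d : ℕ
  hd : 0 < d
  a : ℝ
  b : ℝ
  hab : a < b
  perm0 : Fin d ≃ Fin d
  perm1 : Fin d ≃ Fin d
  len : Fin d → ℝ
  len_pos : ∀ α, 0 < len α
  len_sum : ∑ α, len α = b - a
  irred : ∀ k : ℕ, 0 < k → k < d → ¬ (∀ α, (perm0 α : ℕ) < k ↔ (perm1 α : ℕ) < k)

namespace IET

variable (T : IET)

/-- The left endpoint `∂I_α` of the exchanged interval `I_α`. -/
noncomputable def lep (α : Fin T.d) : ℝ :=
  T.a + ∑ β ∈ Finset.univ.filter (fun β => T.perm0 β < T.perm0 α), T.len β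

/-- The left endpoint of the image interval `T(I_α)`. -/
noncomputable def lepImg (α : Fin T.d) : ℝ :=
  T.a + ∑ β ∈ Finset.univ.filter (fun β => T.perm1 β < T.perm1 α), T.len β

/-- The translation amount on `I_α`. -/
noncomputable def transl (α : Fin T.d) : ℝ := T.lepImg α - T.lep α

/-- The exchanged interval `I_α`. -/
noncomputable def interval (α : Fin T.d) : Set ℝ :=
  Set.Ico (T.lep α) (T.lep α + T.len α)

/-- The image interval `T(I_α)`. -/
noncomputable def intervalImg (α : Fin T.d) : Set ℝ :=
  Set.Ico (T.lepImg α) (T.lepImg α + T.len α)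

/-- The IET as a self-map of `ℝ`: it translates each `I_α` onto its image and is
the identity outside `[a, b)`. -/
noncomputable def toFun (x : ℝ) : ℝ :=
  x + ∑ α, if x ∈ T.interval α then T.transl α else 0

/-- The inverse IET `T⁻¹` as a self-map of `ℝ`. -/
noncomputable def invFun (x : ℝ) : ℝ :=
  x + ∑ α, if x ∈ T.intervalImg α then -T.transl α else 0

/-- The iterate `T^n`, `n : ℤ` (negative iterates via `invFun`). -/
noncomputable def iter (n : ℤ) (x : ℝ) : ℝ :=
  if 0 ≤ n then T.toFun^[n.toNat] x else T.invFun^[(-n).toNat] x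

/-- `M(β) = min {n ≥ 1 | T^{-n}(∂I_β) = ∂I_α for some α with π₁ α ≠ 1}`, with the
convention `M(π₀⁻¹ 1) = 1`, and `∞` if no such `n` exists. -/
noncomputable def M (β : Fin T.d) : ℕ∞ :=
  if (T.perm0 β : ℕ) = 0 then 1
  else sInf {e : ℕ∞ | ∃ n : ℕ, e = (n : ℕ∞) ∧ 1 ≤ n ∧
    ∃ α : Fin T.d, (T.perm1 α : ℕ) ≠ 0 ∧ T.invFun^[n] (T.lep β) = T.lep α}

/-- `N(β) = min {n ≥ 1 | T^{n}(∂I_β) = ∂I_α for some α with π₀ α ≠ 1}`, with the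
convention `N(π₁⁻¹ 1) = 1`, and `∞` if no such `n` exists. -/
noncomputable def N (β : Fin T.d) : ℕ∞ :=
  if (T.perm1 β : ℕ) = 0 then 1
  else sInf {e : ℕ∞ | ∃ n : ℕ, e = (n : ℕ∞) ∧ 1 ≤ n ∧
    ∃ α : Fin T.d, (T.perm0 α : ℕ) ≠ 0 ∧ T.toFun^[n] (T.lep β) = T.lep α}

/-- `s` is a (non-trivial) connection of `T`: the orbit segment
`{T^{-k}(∂I_β) | 0 ≤ k ≤ n}` where `π₀ β ≠ 1`, `π₁ α ≠ 1`, `n ≥ 1` and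
`T^{-n}(∂I_β) = ∂I_α`. -/
def IsConnection (s : Set ℝ) : Prop :=
  ∃ (β α : Fin T.d) (n : ℕ), (T.perm0 β : ℕ) ≠ 0 ∧ (T.perm1 α : ℕ) ≠ 0 ∧ 1 ≤ n ∧
    T.invFun^[n] (T.lep β) = T.lep α ∧
    s = (fun k : ℕ => T.invFun^[k] (T.lep β)) '' {k : ℕ | k ≤ n}

/-- `T` is symmetric: `π₁ ∘ π₀⁻¹ (i) = d + 1 - i` (here with `Fin d` indexing:
`perm1 α + perm0 α + 1 = d`). -/
def IsSymm : Prop := ∀ α, (T.perm1 α : ℕ) + (T.perm0 α : ℕ) + 1 = T.d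

/-- The midpoint `c_α` of the exchanged interval `I_α`. -/
noncomputable def center (α : Fin T.d) : ℝ := T.lep α + T.len α / 2

/-- The midpoint `c_{1/2}` of the interval `I = [a, b)`. -/
noncomputable def centerHalf : ℝ := (T.a + T.b) / 2

/-- Midpoints indexed by `𝒜 ∪ {1/2}`; `none` plays the role of `1/2`. -/
noncomputable def centerOpt (β : Option (Fin T.d)) : ℝ :=
  match β with
  | none => T.centerHalf
  | some α => T.center α

/-- `δ_{1/2}`. -/
def deltaHalf (β : Option (Fin T.d)) : ℕ :=
  match β with
  | none => 1
  | some _ => 0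

/-- The symmetric reflection `𝓘_I (x) = a + b - x` of `I = [a, b)`. -/
noncomputable def refl (x : ℝ) : ℝ := T.a + T.b - x

/-- The first return time `r_J(x) = min {n ≥ 1 | T^n x ∈ J}`. -/
noncomputable def returnTime (J : Set ℝ) (x : ℝ) : ℕ :=
  sInf {n : ℕ | 1 ≤ n ∧ T.toFun^[n] x ∈ J}

/-- The first return map `T_J`. -/
noncomputable def firstReturn (J : Set ℝ) (x : ℝ) : ℝ := T.toFun^[T.returnTime J x] x

/-- The first backward return time `b_J(x) = min {n ≥ 1 | T^{-n} x ∈ J}`. -/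
noncomputable def backTime (J : Set ℝ) (x : ℝ) : ℕ :=
  sInf {n : ℕ | 1 ≤ n ∧ T.invFun^[n] x ∈ J}

/-- The first backward return map `p_J` (the inverse of the first return map `T_J`). -/
noncomputable def backReturn (J : Set ℝ) (x : ℝ) : ℝ := T.invFun^[T.backTime J x] x

/-- `m_{J,α} = inf {n ≥ 0 | T^{-n}(∂I_α) ∈ interior J}`. -/
noncomputable def mJ (J : Set ℝ) (α : Fin T.d) : ℕ :=
  sInf {n : ℕ | T.invFun^[n] (T.lep α) ∈ interior J}

/-- `J` is of form (★): a subinterval `[a_J, b_J) ⊆ I` whose endpoints are iterates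
`T^{m₀}(∂I_{α_J})`, `T^{n₀}(∂I_{β_J})` of left endpoints which do not visit `J` at any
earlier time between `0` and `m₀` (resp. `n₀`). -/
def IsStarForm (J : Set ℝ) : Prop :=
  ∃ (aJ bJ : ℝ) (αJ βJ : Fin T.d) (m₀ n₀ : ℤ),
    aJ < bJ ∧ J = Set.Ico aJ bJ ∧ J ⊆ Set.Ico T.a T.b ∧
    aJ = T.iter m₀ (T.lep αJ) ∧ bJ = T.iter n₀ (T.lep βJ) ∧
    (∀ m : ℤ, (0 ≤ m ∧ m ≤ m₀ ∨ m₀ ≤ m ∧ m ≤ 0) → m ≠ m₀ → T.iter m (T.lep αJ) ∉ J) ∧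
    (∀ n : ℤ, (0 ≤ n ∧ n ≤ n₀ ∨ n₀ ≤ n ∧ n ≤ 0) → n ≠ n₀ → T.iter n (T.lep βJ) ∉ J)

/-- `J` is a `β`-symmetric interval (`β : Option (Fin T.d)`, `none` = `1/2`-symmetric):
`J = [c_β - Δ, c_β + Δ)` with `Δ > 0`, contained in `I_β` (resp. in `I`). -/
def IsSymmetricInterval (J : Set ℝ) (β : Option (Fin T.d)) : Prop :=
  ∃ Δ : ℝ, 0 < Δ ∧ J = Set.Ico (T.centerOpt β - Δ) (T.centerOpt β + Δ) ∧
    (match β with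
      | some γ => J ⊆ T.interval γ
      | none => J ⊆ Set.Ico T.a T.b)

/-- `x` is a left endpoint of one of the intervals exchanged by the first return map
`T_J`, where `J = [aJ, bJ)`: either `x = aJ`, or the forward orbit of `x` before its
first return to `J` meets a left endpoint `∂I_α` of `T` or the right endpoint `bJ`. -/
def IsExchLeftEndpoint (J : Set ℝ) (aJ bJ : ℝ) (x : ℝ) : Prop :=
  x = aJ ∨ ∃ k : ℕ, k < T.returnTime J x ∧
    ((∃ α : Fin T.d, T.toFun^[k] x = T.lep α) ∨ (1 ≤ k ∧ T.toFun^[k] x = bJ))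

/-- A Rokhlin tower decomposition of `I = [a, b)` over `J = [aJ, bJ)` associated with the
first return map `T_J`: the bases `[base γ, base γ + blen γ)` partition `J`, the return
time on the base `γ` is constantly `h γ`, each `T^i` (`i ≤ h γ`) acts as a translation on
the base `γ`, and the tower levels `T^i([base γ, base γ + blen γ))`, `i < h γ`, are
pairwise disjoint and partition `I`. -/
def IsTowerDecomp (aJ bJ : ℝ) {k : ℕ} (base blen : Fin k → ℝ) (h : Fin k → ℕ) : Prop :=
  (∀ γ, 0 < blen γ) ∧ (∀ γ, 1 ≤ h γ) ∧
  Pairwise (Function.onFun Disjoint fun γ => Set.Ico (base γ) (base γ + blen γ)) ∧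
  (⋃ γ, Set.Ico (base γ) (base γ + blen γ)) = Set.Ico aJ bJ ∧
  (∀ γ, ∀ i ≤ h γ, ∀ x ∈ Set.Ico (base γ) (base γ + blen γ),
    T.toFun^[i] x - T.toFun^[i] (base γ) = x - base γ) ∧
  (∀ γ, ∀ x ∈ Set.Ico (base γ) (base γ + blen γ), T.returnTime (Set.Ico aJ bJ) x = h γ) ∧
  (⋃ γ, ⋃ i ∈ Finset.range (h γ), T.toFun^[i] '' Set.Ico (base γ) (base γ + blen γ))
    = Set.Ico T.a T.b ∧
  (∀ γ γ' : Fin k, ∀ i i' : ℕ, i < h γ → i' < h γ' → (γ, i) ≠ (γ', i') →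
    Disjoint (T.toFun^[i] '' Set.Ico (base γ) (base γ + blen γ))
      (T.toFun^[i'] '' Set.Ico (base γ') (base γ' + blen γ')))

/-- Replace the length data of an IET, keeping the combinatorial data. -/
noncomputable abbrev replaceLen (len' : Fin T.d → ℝ) (h1 : ∀ α, 0 < len' α)
    (h2 : ∑ α, len' α = T.b - T.a) : IET :=
  { T with len := len', len_pos := h1, len_sum := h2 }

end IET

open IET

/-! If every `∂I_β` with `π₀ β ≠ 1` returned to some left endpoint under `T⁻¹` (for
`∂I_{π₀⁻¹ 1} = a` this happens after one step), the backward orbit segments of the left endpoints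
would form a finite set `S ⊆ I` with `T⁻¹ S ⊆ S`, hence `T S = S`. As `T` is a translation on a
short right-neighbourhood of each point, the union of the intervals `[s, s + ε)`, `s ∈ S`, is
`T`-invariant for small `ε > 0`, and its measure lies strictly between `0` and `|I|`. -/

open Filter Topology

section FiniteInvariantSets

variable {X : Type*} {g : X → X}

theorem exists_finite_mapsTo_of_iterate_mem_range {ι : Type*} [Finite ι] {p : ι → X}
    (h : ∀ i, ∃ n ≥ 1, g^[n] (p i) ∈ range p) :
    ∃ S : Set X, S.Finite ∧ range p ⊆ S ∧ MapsTo g S S := by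
  choose n hn hret using h
  refine ⟨⋃ i, (fun k => g^[k] (p i)) '' Iio (n i),
    finite_iUnion fun i => (finite_Iio _).image _, ?_, ?_⟩
  · rintro _ ⟨i, rfl⟩
    exact mem_iUnion.2 ⟨i, 0, hn i, rfl⟩
  · intro x hx
    obtain ⟨i, k, hk, rfl⟩ := mem_iUnion.1 hx
    rcases (Nat.succ_le_of_lt hk).lt_or_eq with hlt | heq
    · exact mem_iUnion.2 ⟨i, k + 1, hlt, Function.iterate_succ_apply' g k (p i)⟩
    · obtain ⟨j, hj⟩ := hret i
      refine mem_iUnion.2 ⟨j, 0, hn j, ?_⟩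
      simp only [Function.iterate_zero, id_eq]
      rw [hj, ← heq, Function.iterate_succ_apply']

theorem Set.Finite.mapsTo_of_leftInvOn {f : X → X} {S : Set X} (hS : S.Finite)
    (hg : MapsTo g S S) (hfg : LeftInvOn f g S) : MapsTo f S S :=
  hfg.mapsTo ((hS.injOn_iff_bijOn_of_mapsTo hg).1 hfg.injOn).surjOn

end FiniteInvariantSets

section Ergodicity

variable {f : ℝ → ℝ} {a b : ℝ} {S : Finset ℝ}

theorem exists_pos_uniform_translation_radius (hab : a < b) (hSb : ∀ s ∈ S, s < b)
    (hloc : ∀ s ∈ S, ∃ δ > 0, ∀ x ∈ Ico s (s + δ), f x = x + (f s - s)) :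
    ∃ ε > 0, S.card * ε < b - a ∧
      ∀ s ∈ S, s + ε ≤ b ∧ ∀ x ∈ Ico s (s + ε), f x = x + (f s - s) := by
  have hsmall : ∀ᶠ ε in 𝓝[>] (0 : ℝ), S.card * ε < b - a := by
    refine Tendsto.eventually_lt_const (sub_pos.2 hab) (tendsto_nhdsWithin_of_tendsto_nhds ?_)
    exact (continuous_const.mul continuous_id).tendsto' (0 : ℝ) 0 (by simp)
  have hlocal : ∀ᶠ ε in 𝓝[>] (0 : ℝ),
      ∀ s ∈ S, s + ε ≤ b ∧ ∀ x ∈ Ico s (s + ε), f x = x + (f s - s) := by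
    refine (eventually_all_finset S).2 fun s hs => ?_
    obtain ⟨δ, hδ, hδf⟩ := hloc s hs
    filter_upwards [Ioo_mem_nhdsGT (lt_min hδ (sub_pos.2 (hSb s hs)))] with ε hε
    have hεδ := hε.2.trans_le (min_le_left _ _)
    have hεb := hε.2.trans_le (min_le_right _ _)
    exact ⟨by linarith, fun x hx => hδf x ⟨hx.1, by linarith [hx.2]⟩⟩
  exact (eventually_mem_nhdsWithin.and (hsmall.and hlocal)).exists

theorem not_ergodic_of_mapsTo_finset (hS : S.Nonempty) (hSI : ↑S ⊆ Ico a b)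
    (hmaps : MapsTo f S S)
    (hloc : ∀ s ∈ S, ∃ δ > 0, ∀ x ∈ Ico s (s + δ), f x = x + (f s - s)) :
    ¬ Ergodic f (volume.restrict (Ico a b)) := by
  intro hErg
  obtain ⟨s₀, hs₀⟩ := hS
  have hab : a < b := (hSI hs₀).1.trans_lt (hSI hs₀).2
  obtain ⟨ε, hε, hcard, hεS⟩ :=
    exists_pos_uniform_translation_radius hab (fun s hs => (hSI hs).2) hloc
  set A := ⋃ s ∈ S, Ico s (s + ε)
  have hAinv : A ⊆ f ⁻¹' A := by
    refine iUnion₂_subset fun s hs x hx => ?_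
    rw [mem_preimage, (hεS s hs).2 x hx]
    exact mem_biUnion (hmaps hs) ⟨by linarith [hx.1], by linarith [hx.2]⟩
  set μ := volume.restrict (Ico a b)
  have hpos : μ A ≠ 0 := by
    have hsub : Ico s₀ (s₀ + ε) ⊆ Ico a b := Ico_subset_Ico (hSI hs₀).1 (hεS s₀ hs₀).1
    refine (measure_pos_of_superset (subset_biUnion_of_mem hs₀) ?_).ne'
    rw [Measure.restrict_eq_self _ hsub, Real.volume_Ico]
    simpa using hε
  have hlt : μ A < μ univ :=
    calc μ A ≤ volume A := Measure.restrict_apply_le _ _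
      _ ≤ ∑ s ∈ S, volume (Ico s (s + ε)) := measure_biUnion_finset_le _ _
      _ = ENNReal.ofReal (S.card * ε) := by
        simp [Real.volume_Ico, ENNReal.ofReal_mul]
      _ < ENNReal.ofReal (b - a) := (ENNReal.ofReal_lt_ofReal_iff (sub_pos.2 hab)).2 hcard
      _ = μ univ := by simp [μ, Real.volume_Ico]
  rcases hErg.ae_empty_or_univ_of_ae_le_preimage
      (S.measurableSet_biUnion fun _ _ => measurableSet_Ico).nullMeasurableSet
      hAinv.eventuallyLE with h | h
  · exact hpos (by simpa using measure_congr h)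
  · exact hlt.ne (measure_congr h)

end Ergodicity

namespace IET

variable (T : IET)

noncomputable def cumLen (e : Fin T.d ≃ Fin T.d) (j : ℕ) : ℝ :=
  T.a + ∑ β ∈ Finset.univ.filter (fun β => (e β : ℕ) < j), T.len β

noncomputable def piece (e : Fin T.d ≃ Fin T.d) (α : Fin T.d) : Set ℝ :=
  Ico (T.cumLen e (e α)) (T.cumLen e (e α + 1))

variable {T}

theorem cumLen_zero (e : Fin T.d ≃ Fin T.d) : T.cumLen e 0 = T.a := by
  simp [cumLen]

theorem cumLen_d (e : Fin T.d ≃ Fin T.d) : T.cumLen e T.d = T.b := by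
  rw [cumLen, Finset.filter_true_of_mem fun β _ => (e β).isLt, T.len_sum]
  ring

theorem monotone_cumLen (e : Fin T.d ≃ Fin T.d) : Monotone (T.cumLen e) := fun i j hij => by
  refine add_le_add_right (Finset.sum_le_sum_of_subset_of_nonneg ?_ fun β _ _ => (T.len_pos β).le) _
  intro β hβ
  simp only [Finset.mem_filter, Finset.mem_univ, true_and] at hβ ⊢
  omega

theorem cumLen_succ (e : Fin T.d ≃ Fin T.d) (α : Fin T.d) :
    T.cumLen e (e α + 1) = T.cumLen e (e α) + T.len α := by
  have h : Finset.univ.filter (fun β => (e β : ℕ) < e α + 1)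
      = insert α (Finset.univ.filter (fun β => (e β : ℕ) < e α)) := by
    ext β
    simp [le_iff_lt_or_eq, Fin.val_inj, or_comm]
  rw [cumLen, cumLen, h, Finset.sum_insert (by simp)]
  ring

theorem piece_subset (e : Fin T.d ≃ Fin T.d) (α : Fin T.d) : T.piece e α ⊆ Ico T.a T.b := by
  rw [← T.cumLen_zero e, ← T.cumLen_d e]
  exact Ico_subset_Ico (monotone_cumLen e (Nat.zero_le _)) (monotone_cumLen e (e α).isLt)

theorem eq_of_mem_piece {e : Fin T.d ≃ Fin T.d} {x : ℝ} {α α' : Fin T.d}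
    (h : x ∈ T.piece e α) (h' : x ∈ T.piece e α') : α = α' := by
  by_contra hne
  have hdisj := (monotone_cumLen e).pairwise_disjoint_on_Ico_succ
    (show (e α : ℕ) ≠ e α' by simpa [Fin.val_inj] using hne)
  exact Set.disjoint_left.1 hdisj h h'

theorem exists_mem_piece (e : Fin T.d ≃ Fin T.d) {x : ℝ} (hx : x ∈ Ico T.a T.b) :
    ∃ α, x ∈ T.piece e α := by
  rw [← T.cumLen_zero e, ← T.cumLen_d e] at hx
  obtain ⟨j, hj, hxj⟩ := mem_iUnion₂.1 (Ico_subset_biUnion_Ico _ _ hx)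
  exact ⟨e.symm ⟨j, Finset.mem_range.1 hj⟩, by simpa [piece] using hxj⟩

theorem lep_eq_cumLen (α : Fin T.d) : T.lep α = T.cumLen T.perm0 (T.perm0 α) := by
  unfold lep cumLen
  congr 1

theorem lepImg_eq_cumLen (α : Fin T.d) : T.lepImg α = T.cumLen T.perm1 (T.perm1 α) := by
  unfold lepImg cumLen
  congr 1

theorem interval_eq_piece (α : Fin T.d) : T.interval α = T.piece T.perm0 α := by
  rw [interval, piece, cumLen_succ, lep_eq_cumLen]

theorem intervalImg_eq_piece (α : Fin T.d) : T.intervalImg α = T.piece T.perm1 α := by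
  rw [intervalImg, piece, cumLen_succ, lepImg_eq_cumLen]

theorem lep_mem_interval (α : Fin T.d) : T.lep α ∈ T.interval α :=
  ⟨le_rfl, lt_add_of_pos_right _ (T.len_pos α)⟩

theorem lep_mem_Ico (α : Fin T.d) : T.lep α ∈ Ico T.a T.b :=
  T.piece_subset _ α (T.interval_eq_piece α ▸ T.lep_mem_interval α)

theorem lep_eq_a {α : Fin T.d} (h : (T.perm0 α : ℕ) = 0) : T.lep α = T.a := by
  rw [lep_eq_cumLen, h, cumLen_zero]

theorem sub_transl_mem_interval {x : ℝ} {α : Fin T.d} (h : x ∈ T.intervalImg α) :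
    x - T.transl α ∈ T.interval α := by
  simp only [interval, intervalImg, transl, mem_Ico] at h ⊢
  constructor <;> linarith

theorem toFun_eq_of_mem_interval {x : ℝ} {α : Fin T.d} (h : x ∈ T.interval α) :
    T.toFun x = x + T.transl α := by
  rw [toFun, Finset.sum_eq_single α, if_pos h]
  · intro β _ hβ
    rw [interval_eq_piece] at h
    rw [if_neg fun h' => hβ (eq_of_mem_piece (T.interval_eq_piece β ▸ h') h)]
  · simp

theorem invFun_eq_of_mem_intervalImg {x : ℝ} {α : Fin T.d} (h : x ∈ T.intervalImg α) :
    T.invFun x = x - T.transl α := by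
  rw [invFun, Finset.sum_eq_single α, if_pos h, ← sub_eq_add_neg]
  · intro β _ hβ
    rw [intervalImg_eq_piece] at h
    rw [if_neg fun h' => hβ (eq_of_mem_piece (T.intervalImg_eq_piece β ▸ h') h)]
  · simp

theorem mapsTo_invFun : MapsTo T.invFun (Ico T.a T.b) (Ico T.a T.b) := fun x hx => by
  obtain ⟨α, hα⟩ := T.exists_mem_piece T.perm1 hx
  rw [← intervalImg_eq_piece] at hα
  rw [invFun_eq_of_mem_intervalImg hα]
  exact T.piece_subset _ α (T.interval_eq_piece α ▸ sub_transl_mem_interval hα)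

theorem toFun_invFun {x : ℝ} (hx : x ∈ Ico T.a T.b) : T.toFun (T.invFun x) = x := by
  obtain ⟨α, hα⟩ := T.exists_mem_piece T.perm1 hx
  rw [← intervalImg_eq_piece] at hα
  rw [invFun_eq_of_mem_intervalImg hα, toFun_eq_of_mem_interval (sub_transl_mem_interval hα),
    sub_add_cancel]

theorem invFun_a_mem_range_lep : T.invFun T.a ∈ range T.lep := by
  set α₀ := T.perm1.symm ⟨0, T.hd⟩
  have hα₀ : T.lepImg α₀ = T.a := by
    rw [lepImg_eq_cumLen, Equiv.apply_symm_apply, Fin.val_mk, cumLen_zero]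
  have ha : T.a ∈ T.intervalImg α₀ := ⟨hα₀.le, by linarith [T.len_pos α₀]⟩
  refine ⟨α₀, ?_⟩
  rw [invFun_eq_of_mem_intervalImg ha, transl, hα₀, sub_sub_cancel]

theorem exists_pos_toFun_eq_add_of_mem {x : ℝ} (hx : x ∈ Ico T.a T.b) :
    ∃ δ > 0, ∀ y ∈ Ico x (x + δ), T.toFun y = y + (T.toFun x - x) := by
  obtain ⟨α, hα⟩ := T.exists_mem_piece T.perm0 hx
  rw [← interval_eq_piece] at hα
  refine ⟨T.lep α + T.len α - x, sub_pos.2 hα.2, fun y hy => ?_⟩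
  have hy' : y ∈ T.interval α := ⟨hα.1.trans hy.1, by linarith [hy.2]⟩
  rw [toFun_eq_of_mem_interval hy', toFun_eq_of_mem_interval hα]
  ring

theorem M_eq_top_of_forall_ne {β : Fin T.d} (hβ : (T.perm0 β : ℕ) ≠ 0)
    (h : ∀ n, 1 ≤ n → ∀ α : Fin T.d, (T.perm1 α : ℕ) ≠ 0 → T.invFun^[n] (T.lep β) ≠ T.lep α) :
    T.M β = ⊤ := by
  rw [M, if_neg hβ, sInf_eq_top]
  rintro _ ⟨n, -, hn, α, hα, heq⟩
  exact absurd heq (h n hn α hα)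

theorem exists_iterate_invFun_lep_notMem_range
    (hErg : Ergodic T.toFun (volume.restrict (Ico T.a T.b))) :
    ∃ β, (T.perm0 β : ℕ) ≠ 0 ∧ ∀ n ≥ 1, T.invFun^[n] (T.lep β) ∉ range T.lep := by
  by_contra! h
  have hret : ∀ β, ∃ n ≥ 1, T.invFun^[n] (T.lep β) ∈ range T.lep := by
    intro β
    by_cases hβ : (T.perm0 β : ℕ) = 0
    · exact ⟨1, le_rfl, by simpa [T.lep_eq_a hβ] using T.invFun_a_mem_range_lep⟩
    · exact h β hβ
  obtain ⟨S, hSfin, hlepS, hmaps⟩ := exists_finite_mapsTo_of_iterate_mem_range hret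
  have hfin : (S ∩ Ico T.a T.b).Finite := hSfin.inter_of_left _
  have hfwd : MapsTo T.toFun (S ∩ Ico T.a T.b) (S ∩ Ico T.a T.b) :=
    hfin.mapsTo_of_leftInvOn (hmaps.inter_inter T.mapsTo_invFun) fun x hx => T.toFun_invFun hx.2
  refine not_ergodic_of_mapsTo_finset (S := hfin.toFinset) ?_ ?_ ?_ ?_ hErg
  · exact ⟨T.lep ⟨0, T.hd⟩, hfin.mem_toFinset.2 ⟨hlepS ⟨_, rfl⟩, T.lep_mem_Ico _⟩⟩
  · simp
  · simpa using hfwd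
  · exact fun s hs => T.exists_pos_toFun_eq_add_of_mem (hfin.mem_toFinset.1 hs).2

end IET

/-- an ergodic IET has a letter `β ≠ π₀⁻¹(1)` with `M(β) = ∞`, i.e. whose
backward orbit of `∂I_β` never hits a left endpoint `∂I_α` with `π₁ α ≠ 1`. -/
theorem stmt4 (T : IET)
    (hErg : Ergodic T.toFun (volume.restrict (Set.Ico T.a T.b))) :
    ∃ β : Fin T.d, (T.perm0 β : ℕ) ≠ 0 ∧ T.M β = ⊤ ∧
      ∀ n : ℕ, 1 ≤ n → ∀ α : Fin T.d, (T.perm1 α : ℕ) ≠ 0 →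
        T.invFun^[n] (T.lep β) ≠ T.lep α := by
  obtain ⟨β, hβ, havoid⟩ := T.exists_iterate_invFun_lep_notMem_range hErg
  have hne : ∀ n, 1 ≤ n → ∀ α : Fin T.d, (T.perm1 α : ℕ) ≠ 0 → T.invFun^[n] (T.lep β) ≠ T.lep α :=
    fun n hn α _ heq => havoid n hn ⟨α, heq.symm⟩
  exact ⟨β, hβ, T.M_eq_top_of_forall_ne hβ hne, hne⟩
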